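/- The maximal game length of the ordered Zeckendorf game satisfies the lower bound M(n) ≥ n²/2 − n·log_φ(n) + o(n·log_φ(n)) as n → ∞; equivalently, for every ε > 0 there exists N such that for all n ≥ N, M(n) ≥ n²/2 − (1+ε)·n·log_φ(n), where φ = (1+√5)/2 is the golden ratio. -/

import Mathlib

/-- Fibonacci numbers indexed so that `F 1 = 1`, `F 2 = 2`,
and `F (i+1) = F i + F (i-1)`. -/
def F (i : ℕ) : ℕ := Nat.fib (i + 1)

/-- A single legal move of the ordered Zeckendorf game, acting on an
adjacent pair of entries of the list of indices. -/
inductive Move : List ℕ → List ℕ → Prop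
  | merge (a b : List ℕ) (i : ℕ) (hi : 1 ≤ i) :
      Move (a ++ [i, i + 1] ++ b) (a ++ [i + 2] ++ b)
  | mergeOnes (a b : List ℕ) :
      Move (a ++ [1, 1] ++ b) (a ++ [2] ++ b)
  | split (a b : List ℕ) (i : ℕ) (hi : 2 < i) :
      Move (a ++ [i, i] ++ b) (a ++ [i - 2, i + 1] ++ b)
  | splitTwos (a b : List ℕ) :
      Move (a ++ [2, 2] ++ b) (a ++ [1, 3] ++ b)
  | switch (a b : List ℕ) (i j : ℕ) (hj : 1 ≤ j) (hij : j < i) :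
      Move (a ++ [i, j] ++ b) (a ++ [j, i] ++ b)

/-- A play of the ordered Zeckendorf game on `n` with `m` moves:
the initial state is `n` copies of `1`, and each step is a legal move. -/
def IsPlay (n : ℕ) (s : ℕ → List ℕ) (m : ℕ) : Prop :=
  s 0 = List.replicate n 1 ∧ ∀ t < m, Move (s t) (s (t + 1))

/-- A state is terminal if no legal move applies to it. -/
def Terminal (S : List ℕ) : Prop := ∀ T, ¬ Move S T

/-- The total Fibonacci value of a state. -/
def val (S : List ℕ) : ℕ := (S.map F).sum

/-- The monovariant `f(S) = Σ_{j=1}^k (k+1−j)·F_{i_j}` (here with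
`j` running over 0-based positions, so the weight of position `j` is
`k − j`). -/
def f (S : List ℕ) : ℕ := ∑ j : Fin S.length, (S.length - (j : ℕ)) * F (S.get j)

/-- `M n` is the maximal number of moves in a completed play of the
ordered Zeckendorf game on `n`. -/
noncomputable def M (n : ℕ) : ℕ :=
  sSup {m | ∃ s : ℕ → List ℕ, IsPlay n s m ∧ Terminal (s m)}

/-- The golden ratio `φ = (1+√5)/2`. -/
noncomputable def phi : ℝ := (1 + Real.sqrt 5) / 2

/-- Logarithm to base `φ`. -/
noncomputable def logphi (x : ℝ) : ℝ := Real.log x / Real.log phi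

/-!
Every move lowers `f` by at least one and `f` of `n` ones is `n (n + 1) / 2`, so it suffices to
exhibit a play along which `f` drops by one per move, up to an error of order `n log_φ n`.
Repeatedly merge the two leading ones, move the resulting `2` past the remaining ones by switches,
and carry it into the strictly increasing tail by splits `(c, c) ↦ (c - 2, c + 1)`. Merges,
switches and splits of twos lower `f` by exactly one. A split of `(c, c)` with `c ≥ 3` lowers `f`
by `F (c - 1)`, and this excess is paid for by the potential `∑ weight c`, which never exceeds
`4 (log_φ n + 1) n` since every entry satisfies `F c ≤ n`. When fewer than two ones are left the
state is strictly increasing, so its `f` is at most `8 n`.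
-/

open List

lemma F_add_two (i : ℕ) : F (i + 2) = F (i + 1) + F i := by
  simp only [F, Nat.fib_add_two]; ring

lemma F_pos (i : ℕ) : 0 < F i := Nat.fib_pos.2 i.succ_pos

lemma F_lt_F {i j : ℕ} (hj : 1 ≤ j) (hji : j < i) : F j < F i :=
  (Nat.fib_lt_fib (by omega)).2 (by omega)

lemma three_mul_F_le {i : ℕ} (hi : 1 ≤ i) : 3 * F i ≤ 2 * F (i + 1) := by
  obtain ⟨k, rfl⟩ : ∃ k, i = k + 1 := ⟨i - 1, by omega⟩
  have h3 : Nat.fib (k + 3) = Nat.fib (k + 1) + Nat.fib (k + 2) := Nat.fib_add_two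
  have h2 : Nat.fib (k + 2) = Nat.fib k + Nat.fib (k + 1) := Nat.fib_add_two
  have : Nat.fib k ≤ Nat.fib (k + 1) := Nat.fib_le_fib_succ
  show 3 * Nat.fib (k + 2) ≤ 2 * Nat.fib (k + 3)
  omega

lemma goldenRatio_pow_le_F (i : ℕ) : Real.goldenRatio ^ i ≤ F (i + 1) := by
  have h := Real.fib_succ_sub_goldenConj_mul_fib i
  have : (Nat.fib (i + 2) : ℝ) = Nat.fib i + Nat.fib (i + 1) := by
    rw [Nat.fib_add_two]; push_cast; ring
  have : -1 < Real.goldenConj := Real.neg_one_lt_goldenConj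
  have : (0 : ℝ) ≤ Nat.fib i := Nat.cast_nonneg _
  simp only [F]
  nlinarith

@[simp] lemma val_nil : val [] = 0 := rfl

@[simp] lemma val_cons (x : ℕ) (S : List ℕ) : val (x :: S) = F x + val S := rfl

@[simp] lemma val_append (S T : List ℕ) : val (S ++ T) = val S + val T := by
  simp [val]

lemma F_le_val {x : ℕ} {S : List ℕ} (hx : x ∈ S) : F x ≤ val S := by
  simpa [val] using List.single_le_sum (fun _ _ => Nat.zero_le _) _ (List.mem_map_of_mem hx)

lemma val_replicate_one (n : ℕ) : val (replicate n 1) = n := by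
  simp [val, F]

@[simp] lemma f_nil : f [] = 0 := rfl

lemma f_cons (x : ℕ) (S : List ℕ) : f (x :: S) = (S.length + 1) * F x + f S := by
  simp only [f, length_cons, Fin.sum_univ_succ, Fin.val_zero, Nat.sub_zero, get_cons_zero,
    Fin.val_succ, Nat.add_sub_add_right]
  rfl

lemma f_append (S T : List ℕ) : f (S ++ T) = f S + T.length * val S + f T := by
  induction S with
  | nil => simp [f, val]
  | cons x S ih => simp only [cons_append, f_cons, ih, length_append, val_cons]; ring

lemma two_mul_f_replicate_one (n : ℕ) : 2 * f (replicate n 1) = n * n + n := by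
  induction n with
  | zero => rfl
  | succ n ih =>
    rw [replicate_succ, f_cons, length_replicate, show F 1 = 1 from rfl]
    linarith

lemma f_add_le_of_pairwise_lt {x : ℕ} {S : List ℕ} (hS : (x :: S).Pairwise (· < ·))
    (hx : 1 ≤ x) : f (x :: S) + 2 * (S.length + 3) * F x ≤ 8 * val (x :: S) := by
  induction S generalizing x with
  | nil => simp only [f_cons, f_nil, val_cons, val_nil, length_nil]; omega
  | cons y S ih =>
    obtain ⟨hxy, hyS⟩ := pairwise_cons.1 hS
    have hlt := hxy y mem_cons_self
    have hgrowth : 3 * F x ≤ 2 * F y :=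
      (three_mul_F_le hx).trans (Nat.mul_le_mul_left 2 (Nat.fib_mono (by omega)))
    have := ih hyS (by omega)
    simp only [f_cons, val_cons, length_cons] at this ⊢
    nlinarith

lemma f_le_of_pairwise_lt {S : List ℕ} (hS : S.Pairwise (· < ·)) (hpos : ∀ x ∈ S, 1 ≤ x) :
    f S ≤ 8 * val S := by
  cases S with
  | nil => rfl
  | cons x S => have := f_add_le_of_pairwise_lt hS (hpos x mem_cons_self); omega

-- Chosen so that `weight (c - 2) + weight (c + 1) = 2 * weight c + 5 * F (c - 1)`
-- (`weight_split`): splitting `(c, c)` lowers `f` by `F (c - 1)` and raises the potential by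
-- five times as much.
def weight (c : ℕ) : ℕ := c * (Nat.fib c + 3 * Nat.fib (c + 1))

def potential (S : List ℕ) : ℕ := (S.map weight).sum

@[simp] lemma potential_nil : potential [] = 0 := rfl

@[simp] lemma potential_cons (x : ℕ) (S : List ℕ) :
    potential (x :: S) = weight x + potential S := rfl

@[simp] lemma potential_append (S T : List ℕ) :
    potential (S ++ T) = potential S + potential T := by
  simp [potential]

lemma weight_split (k : ℕ) :
    weight (k + 1) + weight (k + 4) = 2 * weight (k + 3) + 5 * F (k + 2) := by
  have h2 : Nat.fib (k + 2) = Nat.fib k + Nat.fib (k + 1) := Nat.fib_add_two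
  have h3 : Nat.fib (k + 3) = Nat.fib (k + 1) + Nat.fib (k + 2) := Nat.fib_add_two
  have h4 : Nat.fib (k + 4) = Nat.fib (k + 2) + Nat.fib (k + 3) := Nat.fib_add_two
  have h5 : Nat.fib (k + 5) = Nat.fib (k + 3) + Nat.fib (k + 4) := Nat.fib_add_two
  simp only [weight, F, h5, h4, h3, h2]
  ring

lemma weight_le (c : ℕ) : weight c ≤ 4 * c * F c := by
  have : Nat.fib c ≤ Nat.fib (c + 1) := Nat.fib_le_fib_succ
  simp only [weight, F]
  nlinarith

lemma potential_le {S : List ℕ} {K : ℝ} (hK : ∀ c ∈ S, (c : ℝ) ≤ K) :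
    (potential S : ℝ) ≤ 4 * K * val S := by
  induction S with
  | nil => simp [potential, val]
  | cons c S ih =>
    have hc : (weight c : ℝ) ≤ 4 * K * F c :=
      calc (weight c : ℝ) ≤ 4 * c * F c := by exact_mod_cast weight_le c
        _ ≤ 4 * K * F c := by gcongr; exact hK c mem_cons_self
    have := ih fun c' hc' => hK c' (mem_cons_of_mem c hc')
    push_cast [potential_cons, val_cons]
    linarith

lemma f_append_append (a p b : List ℕ) :
    f (a ++ p ++ b) = f a + (p.length + b.length) * val a + f p + b.length * val p + f b := by
  rw [append_assoc, f_append, f_append, length_append]; ring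

lemma f_lt_of_replace (a b : List ℕ) {p q : List ℕ} (hval : val q = val p)
    (hlen : q.length ≤ p.length) (hf : f q < f p) : f (a ++ q ++ b) < f (a ++ p ++ b) := by
  rw [f_append_append, f_append_append, hval]
  have := Nat.mul_le_mul_right (val a) (Nat.add_le_add_right hlen b.length)
  omega

lemma F_add_three_and_F_add_four (k : ℕ) :
    F (k + 3) = F (k + 2) + F (k + 1) ∧ F (k + 4) = F (k + 3) + F (k + 2) :=
  ⟨F_add_two (k + 1), F_add_two (k + 2)⟩

lemma Move.exists_replace {S T : List ℕ} (h : Move S T) :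
    ∃ a b p q, S = a ++ p ++ b ∧ T = a ++ q ++ b ∧
      val q = val p ∧ q.length ≤ p.length ∧ f q < f p := by
  cases h with
  | merge a b i hi =>
    have := F_add_two i
    have := F_pos i
    refine ⟨a, b, _, _, rfl, rfl, ?_, by simp, ?_⟩ <;>
      simp only [val_cons, val_nil, f_cons, f_nil, length_cons, length_nil] <;> omega
  | mergeOnes a b => exact ⟨a, b, _, _, rfl, rfl, by decide, by simp, by decide⟩
  | split a b i hi =>
    obtain ⟨k, rfl⟩ : ∃ k, i = k + 3 := ⟨i - 3, by omega⟩
    have := F_add_three_and_F_add_four k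
    have := F_pos (k + 2)
    refine ⟨a, b, _, _, rfl, rfl, ?_, by simp, ?_⟩ <;>
      simp only [val_cons, val_nil, f_cons, f_nil, length_cons, length_nil,
        show k + 3 - 2 = k + 1 by omega, show k + 3 + 1 = k + 4 by omega] <;> omega
  | splitTwos a b => exact ⟨a, b, _, _, rfl, rfl, by decide, by simp, by decide⟩
  | switch a b i j hj hij =>
    have := F_lt_F hj hij
    refine ⟨a, b, _, _, rfl, rfl, ?_, by simp, ?_⟩ <;>
      simp only [val_cons, val_nil, f_cons, f_nil, length_cons, length_nil] <;> omega

lemma Move.val_eq {S T : List ℕ} (h : Move S T) : val T = val S := by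
  obtain ⟨a, b, p, q, rfl, rfl, hval, -, -⟩ := h.exists_replace
  simp only [val_append, hval]

lemma Move.f_lt {S T : List ℕ} (h : Move S T) : f T < f S := by
  obtain ⟨a, b, p, q, rfl, rfl, hval, hlen, hf⟩ := h.exists_replace
  exact f_lt_of_replace a b hval hlen hf

inductive Steps {α : Type*} (r : α → α → Prop) : ℕ → α → α → Prop
  | refl (a : α) : Steps r 0 a a
  | tail {m : ℕ} {a b c : α} : Steps r m a b → r b c → Steps r (m + 1) a c

namespace Steps

variable {α : Type*} {r r' : α → α → Prop} {m k : ℕ} {a b c : α}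

lemma single (h : r a b) : Steps r 1 a b := (refl a).tail h

lemma trans (h₁ : Steps r m a b) (h₂ : Steps r k b c) : Steps r (m + k) a c := by
  induction h₂ with
  | refl => exact h₁
  | tail _ hr ih => exact (ih h₁).tail hr

lemma mono (hr : ∀ a b, r a b → r' a b) (h : Steps r m a b) : Steps r' m a b := by
  induction h with
  | refl a => exact refl a
  | tail _ hbc ih => exact ih.tail (hr _ _ hbc)

lemma exists_seq (h : Steps r m a b) :
    ∃ s : ℕ → α, s 0 = a ∧ s m = b ∧ ∀ t < m, r (s t) (s (t + 1)) := by
  induction h with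
  | refl a => exact ⟨fun _ => a, rfl, rfl, fun _ ht => absurd ht (Nat.not_lt_zero _)⟩
  | @tail m a b c _ hbc ih =>
    obtain ⟨s, h0, hm, hs⟩ := ih
    refine ⟨fun t => if t ≤ m then s t else c, by simpa using h0, by simp, fun t ht => ?_⟩
    rcases Nat.lt_succ_iff_lt_or_eq.1 ht with ht | rfl
    · simpa [ht.le, Nat.succ_le_of_lt ht] using hs t ht
    · simpa [hm] using hbc

end Steps

lemma Steps.val_eq {m : ℕ} {S T : List ℕ} (h : Steps Move m S T) : val T = val S := by
  induction h with
  | refl => rfl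
  | tail _ hmove ih => rw [hmove.val_eq, ih]

lemma Steps.f_add_le {m : ℕ} {S T : List ℕ} (h : Steps Move m S T) : f T + m ≤ f S := by
  induction h with
  | refl => omega
  | tail _ hmove ih => have := hmove.f_lt; omega

lemma IsPlay.le_f {n m : ℕ} {s : ℕ → List ℕ} (h : IsPlay n s m) :
    m ≤ f (replicate n 1) := by
  have hsteps : ∀ t ≤ m, Steps Move t (s 0) (s t) := by
    intro t ht
    induction t with
    | zero => exact .refl _
    | succ t ih => exact (ih (by omega)).tail (h.2 t (by omega))
  have := (hsteps m le_rfl).f_add_le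
  rw [h.1] at this
  omega

lemma exists_steps_terminal (S : List ℕ) : ∃ m T, Steps Move m S T ∧ Terminal T := by
  induction hS : f S using Nat.strong_induction_on generalizing S with
  | _ N ih =>
    by_cases hterm : Terminal S
    · exact ⟨0, S, .refl S, hterm⟩
    · obtain ⟨S', hmove⟩ := not_forall_not.1 hterm
      obtain ⟨m, T, hsteps, hT⟩ := ih _ (hS ▸ hmove.f_lt) S' rfl
      exact ⟨1 + m, T, (Steps.single hmove).trans hsteps, hT⟩

lemma le_M_of_steps {n m : ℕ} {S : List ℕ} (h : Steps Move m (replicate n 1) S) :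
    m ≤ M n := by
  obtain ⟨k, T, hST, hT⟩ := exists_steps_terminal S
  obtain ⟨s, h0, hm, hs⟩ := (h.trans hST).exists_seq
  have hbdd : BddAbove {m | ∃ s : ℕ → List ℕ, IsPlay n s m ∧ Terminal (s m)} :=
    ⟨f (replicate n 1), fun _ ⟨_, hplay, _⟩ => hplay.le_f⟩
  exact le_trans (Nat.le_add_right m k) (le_csSup hbdd ⟨s, ⟨h0, hs⟩, hm ▸ hT⟩)

-- Along cheap moves the number of moves is at least the drop of `f` minus a fifth of the
-- potential gained (`Steps.ledger`).
def CheapMove (S T : List ℕ) : Prop :=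
  Move S T ∧ 5 * f S + potential S ≤ 5 * f T + potential T + 5

lemma cheapMove_of_replace (a b : List ℕ) {p q : List ℕ}
    (hmove : Move (a ++ (p ++ b)) (a ++ (q ++ b)))
    (hlen : q.length = p.length) (hval : val q = val p)
    (hcost : 5 * f p + potential p ≤ 5 * f q + potential q + 5) :
    CheapMove (a ++ (p ++ b)) (a ++ (q ++ b)) := by
  refine ⟨hmove, ?_⟩
  simp only [← append_assoc, f_append_append, hlen, hval, potential_append]
  omega

lemma cheapMove_mergeOnes (b : List ℕ) : CheapMove (1 :: 1 :: b) (2 :: b) := by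
  refine ⟨Move.mergeOnes [] b, ?_⟩
  simp only [f_cons, potential_cons, length_cons, show F 1 = 1 from rfl, show F 2 = 2 from rfl,
    show weight 1 = 4 from rfl, show weight 2 = 14 from rfl]
  omega

lemma cheapMove_switch (a b : List ℕ) : CheapMove (a ++ 2 :: 1 :: b) (a ++ 1 :: 2 :: b) :=
  cheapMove_of_replace a b (p := [2, 1]) (q := [1, 2])
    (by simpa using Move.switch a b 2 1 le_rfl one_lt_two) rfl rfl (by decide)

lemma cheapMove_splitTwos (a b : List ℕ) : CheapMove (a ++ 2 :: 2 :: b) (a ++ 1 :: 3 :: b) :=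
  cheapMove_of_replace a b (p := [2, 2]) (q := [1, 3])
    (by simpa using Move.splitTwos a b) rfl rfl (by decide)

lemma cheapMove_split (a b : List ℕ) {c : ℕ} (hc : 3 ≤ c) :
    CheapMove (a ++ c :: c :: b) (a ++ (c - 2) :: (c + 1) :: b) := by
  obtain ⟨k, rfl⟩ : ∃ k, c = k + 3 := ⟨c - 3, by omega⟩
  have hmove := Move.split a b (k + 3) (by omega)
  rw [show k + 3 - 2 = k + 1 by omega] at hmove ⊢
  obtain ⟨h3, h4⟩ := F_add_three_and_F_add_four k
  have hw := weight_split k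
  refine cheapMove_of_replace a b (p := [k + 3, k + 3]) (q := [k + 1, k + 4])
    (by simpa using hmove) rfl (by simp only [val_cons, val_nil]; omega) ?_
  simp only [f_cons, potential_cons, potential_nil, length_cons, length_nil, f_nil]
  omega

lemma Steps.ledger {m : ℕ} {S T : List ℕ} (h : Steps CheapMove m S T) :
    5 * f S + potential S ≤ 5 * f T + potential T + 5 * m := by
  induction h with
  | refl => omega
  | tail _ hcheap ih => have := hcheap.2; omega

lemma Steps.toMove {m : ℕ} {S T : List ℕ} (h : Steps CheapMove m S T) : Steps Move m S T :=
  h.mono fun _ _ hcheap => hcheap.1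

lemma steps_bubble (k : ℕ) (W : List ℕ) :
    Steps CheapMove k (2 :: (replicate k 1 ++ W)) (replicate k 1 ++ 2 :: W) := by
  induction k generalizing W with
  | zero => exact .refl _
  | succ k ih =>
    have h := (ih (1 :: W)).tail (cheapMove_switch (replicate k 1) W)
    simpa [replicate_succ'] using h

lemma exists_steps_carry {c : ℕ} (hc : 3 ≤ c) (P W : List ℕ) (hW : W.Pairwise (· < ·))
    (hcW : ∀ x ∈ W, c ≤ x) :
    ∃ m W', Steps CheapMove m (P ++ c :: W) (P ++ W') ∧
      W'.Pairwise (· < ·) ∧ ∀ x ∈ W', c - 2 ≤ x := by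
  induction W generalizing c P with
  | nil => exact ⟨0, [c], .refl _, pairwise_singleton _ _, by simp⟩
  | cons d W ih =>
    obtain ⟨hdW, hWtail⟩ := pairwise_cons.1 hW
    rcases (hcW d mem_cons_self).eq_or_lt with rfl | hcd
    · obtain ⟨m, W', hsteps, hW', hbound⟩ :=
        ih (by omega) (P ++ [c - 2]) hWtail fun x hx => hdW x hx
      refine ⟨1 + m, (c - 2) :: W', (Steps.single (cheapMove_split P W hc)).trans ?_,
        pairwise_cons.2 ⟨fun x hx => ?_, hW'⟩, ?_⟩
      · simpa using hsteps
      · have := hbound x hx; omega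
      · intro x hx
        rcases mem_cons.1 hx with rfl | hx
        · rfl
        · have := hbound x hx; omega
    · refine ⟨0, c :: d :: W, .refl _, pairwise_cons.2 ⟨?_, hW⟩, ?_⟩
      · simp only [mem_cons, forall_eq_or_imp]
        exact ⟨hcd, fun x hx => hcd.trans (hdW x hx)⟩
      · intro x hx
        rcases mem_cons.1 hx with rfl | hx
        · omega
        · have := hcW x hx; omega

lemma exists_eq_replicate_one_append {S : List ℕ} (hS : S.Pairwise (· < ·))
    (hpos : ∀ x ∈ S, 1 ≤ x) :
    ∃ e W, S = replicate e 1 ++ W ∧ W.Pairwise (· < ·) ∧ ∀ x ∈ W, 2 ≤ x := by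
  rcases S with _ | ⟨x, S⟩
  · exact ⟨0, [], rfl, .nil, by simp⟩
  obtain ⟨hxS, hS'⟩ := pairwise_cons.1 hS
  by_cases hx : x = 1
  · subst hx
    exact ⟨1, S, rfl, hS', fun y hy => hxS y hy⟩
  · refine ⟨0, x :: S, rfl, hS, fun y hy => ?_⟩
    have := hpos x mem_cons_self
    rcases mem_cons.1 hy with rfl | hy
    · omega
    · have := hxS y hy; omega

lemma exists_steps_insert_two (P W : List ℕ) (hW : W.Pairwise (· < ·))
    (h2 : ∀ x ∈ W, 2 ≤ x) :
    ∃ m e W', Steps CheapMove m (P ++ 2 :: W) (P ++ replicate e 1 ++ W') ∧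
      W'.Pairwise (· < ·) ∧ ∀ x ∈ W', 2 ≤ x := by
  rcases W with _ | ⟨d, W⟩
  · exact ⟨0, 0, [2], by simpa using .refl _, pairwise_singleton _ _, by simp⟩
  obtain ⟨hdW, hW'⟩ := pairwise_cons.1 hW
  rcases (h2 d mem_cons_self).eq_or_lt with rfl | h2d
  · obtain ⟨m, W₁, hsteps, hW₁, hbound⟩ :=
      exists_steps_carry le_rfl (P ++ [1]) W hW' fun x hx => hdW x hx
    obtain ⟨e, W', rfl, hW', h2'⟩ := exists_eq_replicate_one_append hW₁ hbound
    refine ⟨1 + m, 1 + e, W', (Steps.single (cheapMove_splitTwos P W)).trans ?_, hW', h2'⟩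
    simpa [replicate_add] using hsteps
  · refine ⟨0, 0, 2 :: d :: W, by simpa using .refl _, pairwise_cons.2 ⟨?_, hW⟩, ?_⟩
    · simp only [mem_cons, forall_eq_or_imp]
      exact ⟨h2d, fun x hx => h2d.trans (hdW x hx)⟩
    · intro x hx
      rcases mem_cons.1 hx with rfl | hx
      exacts [le_rfl, h2 x hx]

lemma exists_steps_round (s : ℕ) (W : List ℕ) (hW : W.Pairwise (· < ·))
    (h2 : ∀ x ∈ W, 2 ≤ x) :
    ∃ m r W', 0 < m ∧ Steps CheapMove m (replicate (s + 2) 1 ++ W) (replicate r 1 ++ W') ∧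
      W'.Pairwise (· < ·) ∧ ∀ x ∈ W', 2 ≤ x := by
  obtain ⟨m, e, W', hsteps, hW', h2'⟩ := exists_steps_insert_two (replicate s 1) W hW h2
  refine ⟨1 + s + m, s + e, W', by omega, ?_, hW', h2'⟩
  have := ((Steps.single (cheapMove_mergeOnes _)).trans (steps_bubble s W)).trans hsteps
  rwa [replicate_add s e]

lemma exists_steps_pairwise_lt (r : ℕ) (W : List ℕ) (hW : W.Pairwise (· < ·))
    (h2 : ∀ x ∈ W, 2 ≤ x) :
    ∃ m T, Steps CheapMove m (replicate r 1 ++ W) T ∧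
      T.Pairwise (· < ·) ∧ ∀ x ∈ T, 1 ≤ x := by
  induction hf : f (replicate r 1 ++ W) using Nat.strong_induction_on generalizing r W with
  | _ N ih =>
    match r with
    | 0 => exact ⟨0, W, .refl _, hW, fun x hx => (h2 x hx).trans' one_le_two⟩
    | 1 =>
      refine ⟨0, 1 :: W, .refl _, pairwise_cons.2 ⟨fun x hx => h2 x hx, hW⟩, ?_⟩
      simp only [mem_cons, forall_eq_or_imp, le_refl, true_and]
      exact fun x hx => (h2 x hx).trans' one_le_two
    | s + 2 =>
      obtain ⟨m, r, W', hm, hsteps, hW', h2'⟩ := exists_steps_round s W hW h2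
      have hlt : f (replicate r 1 ++ W') < N := by have := hsteps.toMove.f_add_le; omega
      obtain ⟨k, T, hT, hTsorted, hTpos⟩ := ih _ hlt r W' hW' h2' rfl
      exact ⟨m + k, T, hsteps.trans hT, hTsorted, hTpos⟩

lemma logphi_eq_logb (x : ℝ) : logphi x = Real.logb Real.goldenRatio x := rfl

lemma le_logphi_of_two_pow_le {k n : ℕ} (h : 2 ^ k ≤ n) : (k : ℝ) ≤ logphi n := by
  have hn : (0 : ℝ) < n := by exact_mod_cast (Nat.two_pow_pos k).trans_le h
  rw [logphi_eq_logb, Real.le_logb_iff_rpow_le Real.one_lt_goldenRatio hn, Real.rpow_natCast]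
  calc Real.goldenRatio ^ k ≤ 2 ^ k :=
        pow_le_pow_left₀ Real.goldenRatio_pos.le Real.goldenRatio_lt_two.le k
    _ ≤ n := by exact_mod_cast h

lemma le_logphi_add_one_of_F_le {c n : ℕ} (h : F c ≤ n) : (c : ℝ) ≤ logphi n + 1 := by
  have hn : 1 ≤ n := (F_pos c).trans_le h
  rcases c with _ | c
  · have := le_logphi_of_two_pow_le (k := 0) hn
    push_cast at this ⊢
    linarith
  · have hpow : Real.goldenRatio ^ c ≤ n := (goldenRatio_pow_le_F c).trans (by exact_mod_cast h)
    have hlog : (c : ℝ) ≤ logphi n := by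
      rw [logphi_eq_logb, Real.le_logb_iff_rpow_le Real.one_lt_goldenRatio (by positivity),
        Real.rpow_natCast]
      exact hpow
    push_cast
    linarith

theorem sq_div_two_sub_le_M (n : ℕ) : (n : ℝ) ^ 2 / 2 - n * (4 / 5 * logphi n + 9) ≤ M n := by
  obtain ⟨m, T, hsteps, hT, hpos⟩ := exists_steps_pairwise_lt n [] .nil (by simp)
  rw [append_nil] at hsteps
  have hval : val T = n := by rw [hsteps.toMove.val_eq, val_replicate_one]
  have hM : (m : ℝ) ≤ M n := by exact_mod_cast le_M_of_steps hsteps.toMove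
  have hledger : (5 * f (replicate n 1) : ℝ) ≤ 5 * f T + potential T + 5 * m := by
    exact_mod_cast (Nat.le_add_right _ _).trans hsteps.ledger
  have hf₀ : (2 * f (replicate n 1) : ℝ) = n ^ 2 + n := by
    exact_mod_cast (two_mul_f_replicate_one n).trans (by ring)
  have hfT : (f T : ℝ) ≤ 8 * n := by exact_mod_cast hval ▸ f_le_of_pairwise_lt hT hpos
  have hpot : (potential T : ℝ) ≤ 4 * (logphi n + 1) * n := by
    rw [← hval]
    exact potential_le fun c hc => le_logphi_add_one_of_F_le (hval ▸ F_le_val hc)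
  linarith

theorem stmt_15 :
    ∀ ε : ℝ, 0 < ε → ∃ N : ℕ, ∀ n : ℕ, N ≤ n →
      (n : ℝ) ^ 2 / 2 - (1 + ε) * n * logphi n ≤ (M n : ℝ) := by
  intro ε hε
  refine ⟨2 ^ 45, fun n hn => ?_⟩
  have hlog : (45 : ℝ) ≤ logphi n := by exact_mod_cast le_logphi_of_two_pow_le hn
  have := sq_div_two_sub_le_M n
  have : 0 ≤ n * (logphi n - 45) := mul_nonneg n.cast_nonneg (by linarith)
  have : 0 ≤ ε * n * logphi n := by positivity
  linarith
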